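/- arXiv:math/9602219 — 2 statements merged into one kernel-verified Lean document; each statement's English description precedes it below -/
import Mathlib

section
/- Let X and Y be standard Borel spaces, x ↦ νˣ a Borel family of finite measures on Y, and suppose f assigns to each x ∈ X a class f(x) ∈ L¹(νˣ) such that x ↦ f(x)νˣ is Borel as a measure-valued map. Then there is a Borel function F : X × Y → ℂ such that for every x, F(x,·) is νˣ-integrable and represents the class f(x); moreover F can be chosen so that whenever f(x) ∈ L∞(νˣ), F(x,·) is bounded pointwise by ‖f(x)‖_∞, and so that F(x,·) = F(x',·) (everywhere) whenever νˣ = ν^{x'} and f(x) = f(x'). -/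
/-!
A standard Borel space `Y` is countably generated, so it carries a refining sequence of finite
measurable partitions generating its σ-algebra. Averaging `f x` over the cells of the `n`-th
partition with respect to `νˣ` gives a Borel function of `(x, y)`: it only involves the numbers
`νˣ(A)` and `∫_A f x dνˣ` for finitely many cells `A`. For fixed `x` these averages are the
conditional expectations of `f x` along the partition filtration, so by Lévy's upward theorem they
converge `νˣ`-a.e. to `f x`. Take `F` to be their pointwise limit where it exists and `0`
elsewhere. Averages never exceed an essential bound of `f x`, and they depend only on `νˣ` and on
the class of `f x`, hence so does `F`.
-/

open MeasureTheory ProbabilityTheory MeasurableSpace Filter Topology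

section SetAverage

variable {Y E : Type*} [MeasurableSpace Y] [NormedAddCommGroup E] [NormedSpace ℝ E]

theorem ContinuousLinearMap.average_comp_comm [CompleteSpace E] {F : Type*}
    [NormedAddCommGroup F] [NormedSpace ℝ F] [CompleteSpace F] (L : E →L[ℝ] F) {μ : Measure Y}
    {g : Y → E} (hg : Integrable g μ) :
    ⨍ y, L (g y) ∂μ = L (⨍ y, g y ∂μ) :=
  L.integral_comp_comm hg.to_average

theorem norm_setAverage_le {μ : Measure Y} {g : Y → E} {C : ℝ} (hC : 0 ≤ C)
    (hg : ∀ᵐ y ∂μ, ‖g y‖ ≤ C) (s : Set Y) : ‖⨍ y in s, g y ∂μ‖ ≤ C := by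
  rw [setAverage_eq, norm_smul, norm_inv, Real.norm_of_nonneg measureReal_nonneg]
  rcases eq_or_ne (μ.real s) 0 with hs | hs
  · simpa [hs] using hC
  have hint : ‖∫ y in s, g y ∂μ‖ ≤ C * μ.real s :=
    norm_setIntegral_le_of_norm_le_const_ae (ENNReal.toReal_ne_zero.1 hs).2.lt_top
      (ae_restrict_of_ae hg)
  calc (μ.real s)⁻¹ * ‖∫ y in s, g y ∂μ‖ ≤ (μ.real s)⁻¹ * (C * μ.real s) := by gcongr
    _ = C := by field_simp

end SetAverage

section PartitionAverage

variable {Y E : Type*} [MeasurableSpace Y] [CountablyGenerated Y] [NormedAddCommGroup E]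
  [NormedSpace ℝ E]

noncomputable def partitionAverage (n : ℕ) (μ : Measure Y) (g : Y → E) (y : Y) : E :=
  ⨍ z in countablePartitionSet n y, g z ∂μ

theorem partitionAverage_eq_of_mem {n : ℕ} {s : Set Y} (hs : s ∈ countablePartition Y n)
    {y : Y} (hy : y ∈ s) (μ : Measure Y) (g : Y → E) :
    partitionAverage n μ g y = ⨍ z in s, g z ∂μ := by
  rw [partitionAverage, countablePartitionSet_of_mem hs hy]

theorem partitionAverage_congr_ae {μ : Measure Y} {g g' : Y → E} (h : g =ᵐ[μ] g') (n : ℕ) :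
    partitionAverage n μ g = partitionAverage n μ g' :=
  funext fun _ => average_congr (ae_restrict_of_ae h)

theorem norm_partitionAverage_le {μ : Measure Y} {g : Y → E} {C : ℝ}
    (hC : 0 ≤ C) (hg : ∀ᵐ y ∂μ, ‖g y‖ ≤ C) (n : ℕ) (y : Y) :
    ‖partitionAverage n μ g y‖ ≤ C :=
  norm_setAverage_le hC hg _

theorem stronglyMeasurable_partitionAverage (n : ℕ) (μ : Measure Y) (g : Y → E) :
    StronglyMeasurable[countableFiltration Y n] (partitionAverage n μ g) := by
  have : Finite (countablePartition Y n) := (finite_countablePartition Y n).to_subtype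
  have hcell : @StronglyMeasurable _ _ _ ⊤ fun s : countablePartition Y n => ⨍ z in s, g z ∂μ :=
    let _ : MeasurableSpace (countablePartition Y n) := ⊤; .of_discrete
  exact (hcell.comp_measurable (measurable_countablePartitionSet_subtype n ⊤) :)

theorem integrable_partitionAverage (μ : Measure Y) [IsFiniteMeasure μ] (g : Y → E) (n : ℕ) :
    Integrable (partitionAverage n μ g) μ := by
  have : Finite (countablePartition Y n) := (finite_countablePartition Y n).to_subtype
  obtain ⟨C, hC⟩ := Finite.bddAbove_range fun s : countablePartition Y n => ‖⨍ z in s, g z ∂μ‖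
  refine .of_bound ((stronglyMeasurable_partitionAverage n μ g).mono
    ((countableFiltration Y).le n)).aestronglyMeasurable C (ae_of_all _ fun y => ?_)
  exact hC ⟨⟨_, countablePartitionSet_mem n y⟩, rfl⟩

theorem measurable_partitionAverage_family [MeasurableSpace E] [BorelSpace E]
    [SecondCountableTopology E] {X : Type*} [MeasurableSpace X] {μ : X → Measure Y}
    {g : X → Y → E} (hμ : ∀ s, MeasurableSet s → Measurable fun x => μ x s)
    (hg : ∀ s, MeasurableSet s → Measurable fun x => ∫ y in s, g x y ∂μ x) (n : ℕ) :
    Measurable fun p : X × Y => partitionAverage n (μ p.1) (g p.1) p.2 := by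
  let _ : MeasurableSpace (countablePartition Y n) := ⊤
  have : Finite (countablePartition Y n) := (finite_countablePartition Y n).to_subtype
  have hcell : Measurable fun q : X × countablePartition Y n => ⨍ y in q.2, g q.1 y ∂μ q.1 := by
    refine measurable_from_prod_countable_left fun s => ?_
    have hs := measurableSet_countablePartition n s.2
    simp_rw [setAverage_eq]
    exact ((hμ s hs).ennreal_toReal.inv).smul (hg s hs)
  have hcellOf : Measurable fun y : Y =>
      (⟨countablePartitionSet n y, countablePartitionSet_mem n y⟩ : countablePartition Y n) :=
    (measurable_countablePartitionSet_subtype n ⊤).mono ((countableFiltration Y).le n) le_rfl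
  exact (hcell.comp (measurable_fst.prodMk (hcellOf.comp measurable_snd)) :)

variable [CompleteSpace E]

theorem ContinuousLinearMap.map_partitionAverage {F : Type*}
    [NormedAddCommGroup F] [NormedSpace ℝ F] [CompleteSpace F] (L : E →L[ℝ] F) {μ : Measure Y}
    {g : Y → E} (hg : Integrable g μ) (n : ℕ) (y : Y) :
    L (partitionAverage n μ g y) = partitionAverage n μ (fun z => L (g z)) y :=
  (L.average_comp_comm hg.restrict).symm

theorem setIntegral_partitionAverage {μ : Measure Y} [IsFiniteMeasure μ] {g : Y → E}
    (hg : Integrable g μ) {n : ℕ} {A : Set Y} (hA : MeasurableSet[countableFiltration Y n] A) :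
    ∫ y in A, partitionAverage n μ g y ∂μ = ∫ y in A, g y ∂μ := by
  obtain ⟨S, hS, rfl⟩ := (measurableSet_generateFrom_countablePartition_iff n A).1 hA
  have hmeas : ∀ s ∈ S, MeasurableSet s := fun s hs => measurableSet_countablePartition n (hS hs)
  have hdisj : (S : Set (Set Y)).Pairwise (Function.onFun Disjoint id) :=
    fun s hs t ht hst => disjoint_countablePartition (hS hs) (hS ht) hst
  rw [Set.sUnion_eq_biUnion, Finset.set_biUnion_coe, integral_biUnion_finset S hmeas hdisj
      fun _ _ => (integrable_partitionAverage μ g n).integrableOn,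
    integral_biUnion_finset S hmeas hdisj fun _ _ => hg.integrableOn]
  refine Finset.sum_congr rfl fun s hs => ?_
  rw [setIntegral_congr_fun (hmeas s hs) fun y hy => partitionAverage_eq_of_mem (hS hs) hy μ g,
    setIntegral_setAverage]

theorem partitionAverage_ae_eq_condExp {μ : Measure Y} [IsFiniteMeasure μ] {g : Y → E}
    (hg : Integrable g μ) (n : ℕ) :
    partitionAverage n μ g =ᵐ[μ] μ[g | countableFiltration Y n] :=
  ae_eq_condExp_of_forall_setIntegral_eq ((countableFiltration Y).le n) hg
    (fun _ _ _ => (integrable_partitionAverage μ g n).integrableOn)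
    (fun _ hA _ => setIntegral_partitionAverage hg hA)
    (stronglyMeasurable_partitionAverage n μ g).aestronglyMeasurable

end PartitionAverage

theorem Complex.tendsto_of_tendsto_re_im {ι : Type*} {l : Filter ι} {u : ι → ℂ} {z : ℂ}
    (hre : Tendsto (fun i => (u i).re) l (𝓝 z.re))
    (him : Tendsto (fun i => (u i).im) l (𝓝 z.im)) : Tendsto u l (𝓝 z) := by
  simpa [Function.comp_def, Complex.equivRealProdCLM_symm_apply, Complex.re_add_im] using
    (Complex.equivRealProdCLM.symm.continuous.tendsto _).comp (hre.prodMk_nhds him)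

section Convergence

variable {Y : Type*} [MeasurableSpace Y] [CountablyGenerated Y] {μ : Measure Y}
  [IsFiniteMeasure μ]

theorem ae_tendsto_partitionAverage_real {g : Y → ℝ} (hg : Integrable g μ) :
    ∀ᵐ y ∂μ, Tendsto (fun n => partitionAverage n μ g y) atTop (𝓝 (g y)) := by
  have hg' : Integrable (hg.1.mk g) μ := hg.congr hg.1.ae_eq_mk
  have hlevy := hg'.tendsto_ae_condExp (ℱ := countableFiltration Y)
    (by rw [iSup_countableFiltration]; exact hg.1.stronglyMeasurable_mk)
  have hcondExp := ae_all_iff.2 (partitionAverage_ae_eq_condExp hg')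
  filter_upwards [hlevy, hcondExp, hg.1.ae_eq_mk] with y hy hcy hgy
  simp_rw [partitionAverage_congr_ae hg.1.ae_eq_mk, hcy, hgy]
  exact hy

theorem ae_tendsto_partitionAverage {g : Y → ℂ} (hg : Integrable g μ) :
    ∀ᵐ y ∂μ, Tendsto (fun n => partitionAverage n μ g y) atTop (𝓝 (g y)) := by
  filter_upwards [ae_tendsto_partitionAverage_real hg.re,
    ae_tendsto_partitionAverage_real hg.im] with y hre him
  refine Complex.tendsto_of_tendsto_re_im ?_ ?_
  · simpa [← Complex.reCLM_apply, Complex.reCLM.map_partitionAverage hg] using hre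
  · simpa [← Complex.imCLM_apply, Complex.imCLM.map_partitionAverage hg] using him

end Convergence

section LimOrZero

variable {α E : Type*} [NormedAddCommGroup E]

-- On divergent sequences `limUnder` returns an arbitrary point; `0` keeps pointwise bounds.
open Classical in
noncomputable def limOrZero (u : ℕ → α → E) (a : α) : E :=
  if ∃ c, Tendsto (u · a) atTop (𝓝 c) then limUnder atTop (u · a) else 0

theorem limOrZero_eq_of_tendsto {u : ℕ → α → E} {a : α} {c : E}
    (h : Tendsto (u · a) atTop (𝓝 c)) : limOrZero u a = c := by
  rw [limOrZero, if_pos ⟨c, h⟩, h.limUnder_eq]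

theorem limOrZero_congr {u : ℕ → α → E} {a b : α} (h : ∀ n, u n a = u n b) :
    limOrZero u a = limOrZero u b := by
  rw [limOrZero, limOrZero, show (u · a) = (u · b) from funext h]

theorem norm_limOrZero_le {u : ℕ → α → E} {a : α} {C : ℝ} (hC : 0 ≤ C)
    (hu : ∀ n, ‖u n a‖ ≤ C) : ‖limOrZero u a‖ ≤ C := by
  by_cases h : ∃ c, Tendsto (u · a) atTop (𝓝 c)
  · rw [limOrZero, if_pos h]
    exact le_of_tendsto' (tendsto_nhds_limUnder h).norm hu
  · rwa [limOrZero, if_neg h, norm_zero]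

theorem measurable_limOrZero [MeasurableSpace α] [CompleteSpace E] [SecondCountableTopology E]
    [MeasurableSpace E] [BorelSpace E] {u : ℕ → α → E} (hu : ∀ n, Measurable (u n)) :
    Measurable (limOrZero u) :=
  Measurable.ite (measurableSet_exists_tendsto hu)
    (StronglyMeasurable.limUnder fun n => (hu n).stronglyMeasurable).measurable measurable_const

end LimOrZero

theorem borel_selection_of_L1_family_general {X Y : Type*}
    [MeasurableSpace X]
    [MeasurableSpace Y] [StandardBorelSpace Y]
    (ν : X → Measure Y) (hνfin : ∀ x, IsFiniteMeasure (ν x))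
    (hνmeas : ∀ A : Set Y, MeasurableSet A → Measurable fun x => ν x A)
    (f : X → Y → ℂ) (hfint : ∀ x, Integrable (f x) (ν x))
    (hfmeas : ∀ A : Set Y, MeasurableSet A →
      Measurable fun x => ∫ y in A, f x y ∂(ν x)) :
    ∃ F : X × Y → ℂ, Measurable F ∧
      (∀ x, Integrable (fun y => F (x, y)) (ν x)) ∧
      (∀ x, (fun y => F (x, y)) =ᵐ[ν x] f x) ∧
      (∀ x (C : ℝ), 0 ≤ C → (∀ᵐ y ∂(ν x), ‖f x y‖ ≤ C) → ∀ y, ‖F (x, y)‖ ≤ C) ∧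
      (∀ x x', ν x = ν x' → f x =ᵐ[ν x] f x' → ∀ y, F (x, y) = F (x', y)) := by
  let F := limOrZero fun n (p : X × Y) => partitionAverage n (ν p.1) (f p.1) p.2
  have hF : ∀ x, (fun y => F (x, y)) =ᵐ[ν x] f x := fun x => by
    filter_upwards [ae_tendsto_partitionAverage (hfint x)] with y hy
    exact limOrZero_eq_of_tendsto hy
  refine ⟨F, measurable_limOrZero (measurable_partitionAverage_family hνmeas hfmeas),
    fun x => (hfint x).congr (hF x).symm, hF, ?_, ?_⟩
  · intro x C hC hbound y
    exact norm_limOrZero_le hC fun n => norm_partitionAverage_le hC hbound n y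
  · intro x x' hν hf y
    refine limOrZero_congr fun n => ?_
    dsimp only
    rw [partitionAverage_congr_ae hf, hν]

/-- Lemma 2.1: let `X`, `Y` be standard Borel spaces, `x ↦ νˣ` a Borel family of finite
measures on `Y`, and `f` a family of representatives with `f x ∈ L¹(νˣ)` such that
`x ↦ f x · νˣ` is Borel (i.e. `x ↦ ∫_A f x dνˣ` is Borel for each Borel `A`).  Then there
is a Borel `F : X × Y → ℂ` with `F (x, ·)` integrable for `νˣ` and in the class of `f x`
for every `x`; moreover `F` may be chosen so that whenever `f x` is essentially bounded
by some `C ≥ 0` then `F (x, ·)` is pointwise bounded by `C`, and so that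
`F (x, ·) = F (x', ·)` everywhere whenever `νˣ = ν^{x'}` and `f x = f x'` in `L¹(νˣ)`. -/
theorem borel_selection_of_L1_family {X Y : Type*}
    [MeasurableSpace X] [StandardBorelSpace X]
    [MeasurableSpace Y] [StandardBorelSpace Y]
    (ν : X → Measure Y) (hνfin : ∀ x, IsFiniteMeasure (ν x))
    (hνmeas : ∀ A : Set Y, MeasurableSet A → Measurable fun x => ν x A)
    (f : X → Y → ℂ) (hfint : ∀ x, Integrable (f x) (ν x))
    (hfmeas : ∀ A : Set Y, MeasurableSet A →
      Measurable fun x => ∫ y in A, f x y ∂(ν x)) :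
    ∃ F : X × Y → ℂ, Measurable F ∧
      (∀ x, Integrable (fun y => F (x, y)) (ν x)) ∧
      (∀ x, (fun y => F (x, y)) =ᵐ[ν x] f x) ∧
      (∀ x (C : ℝ), 0 ≤ C → (∀ᵐ y ∂(ν x), ‖f x y‖ ≤ C) → ∀ y, ‖F (x, y)‖ ≤ C) ∧
      (∀ x x', ν x = ν x' → f x =ᵐ[ν x] f x' → ∀ y, F (x, y) = F (x', y)) :=
  borel_selection_of_L1_family_general ν hνfin hνmeas f hfint hfmeas
end

section
/- Let G be a discrete group, p : G → ℂ positive definite, and for g ∈ ℓ¹(G) let λ(g) denote the left convolution operator by g on ℓ²(G). Then for all f ∈ ℓ¹(G) with f ≥ 0 pointwise, ‖λ(p·f)‖ ≤ p(1)·‖λ(f)‖. -/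
open scoped ComplexConjugate ComplexOrder
open scoped ENNReal

/-- `p : G → ℂ` is positive definite (discrete version of condition (P)). -/
def IsPosDef {G : Type*} [Group G] (p : G → ℂ) : Prop :=
  ∀ f : G →₀ ℂ,
    0 ≤ ∑ γ₁ ∈ f.support, ∑ γ₂ ∈ f.support, f γ₁ * conj (f γ₂) * p (γ₂⁻¹ * γ₁)

lemma posdef_one {G : Type*} [Group G] {p : G → ℂ} (hp : IsPosDef p) : 0 ≤ p 1 := by
  have := hp (Finsupp.single 1 1)
  simpa [Finsupp.support_single_ne_zero (1 : G) (one_ne_zero (α := ℂ))] using this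

lemma posdef_pair {G : Type*} [Group G] {p : G → ℂ} (hp : IsPosDef p) {γ : G} (hγ : γ ≠ 1)
    {a b : ℂ} (ha : a ≠ 0) (hb : b ≠ 0) :
    0 ≤ a * conj a * p 1 + b * conj b * p 1 + b * conj a * p γ + a * conj b * p γ⁻¹ := by
  classical
  have h := hp (Finsupp.single 1 a + Finsupp.single γ b)
  have hd : Disjoint (Finsupp.single (1:G) a).support (Finsupp.single γ b).support := by
    rw [Finsupp.support_single_ne_zero _ ha, Finsupp.support_single_ne_zero _ hb]
    simp [hγ, hγ.symm]
  have hsupp : (Finsupp.single (1:G) a + Finsupp.single γ b).support = {1, γ} := by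
    rw [Finsupp.support_add_eq hd, Finsupp.support_single_ne_zero _ ha,
      Finsupp.support_single_ne_zero _ hb]
    rfl
  have h1 : (Finsupp.single (1:G) a + Finsupp.single γ b) 1 = a := by
    simp [Finsupp.single_apply, hγ, hγ.symm]
  have h2 : (Finsupp.single (1:G) a + Finsupp.single γ b) γ = b := by
    simp [Finsupp.single_apply, hγ, hγ.symm]
  rw [hsupp] at h
  rw [Finset.sum_pair hγ.symm] at h
  simp only [Finset.sum_pair hγ.symm, h1, h2] at h
  convert h using 1
  simp only [inv_one, one_mul, mul_one, mul_inv_cancel, inv_mul_cancel]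
  ring

lemma posdef_conj {G : Type*} [Group G] {p : G → ℂ} (hp : IsPosDef p) (γ : G) :
    p γ⁻¹ = conj (p γ) := by
  rcases eq_or_ne γ 1 with rfl | hγ
  · have h1 := posdef_one hp
    rw [Complex.nonneg_iff] at h1
    rw [inv_one]
    exact (Complex.ext (by simp) (by simp [← h1.2])).symm
  · have h1 := posdef_one hp
    rw [Complex.nonneg_iff] at h1
    have hA := posdef_pair hp hγ (one_ne_zero (α := ℂ)) (one_ne_zero (α := ℂ))
    have hB := posdef_pair hp hγ (one_ne_zero (α := ℂ)) Complex.I_ne_zero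
    rw [Complex.nonneg_iff] at hA hB
    have hA2 := hA.2
    have hB2 := hB.2
    simp [Complex.add_im, Complex.mul_im, Complex.mul_re, Complex.I_re, Complex.I_im,
      ← h1.2] at hA2 hB2
    apply Complex.ext
    · simp; linarith
    · simp; linarith

lemma posdef_norm_le {G : Type*} [Group G] {p : G → ℂ} (hp : IsPosDef p) (γ : G) :
    ‖p γ‖ ≤ (p 1).re := by
  have h1 := posdef_one hp
  rw [Complex.nonneg_iff] at h1
  rcases eq_or_ne (p γ) 0 with h0 | h0
  · simpa [h0] using h1.1
  rcases eq_or_ne γ 1 with rfl | hγ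
  · rw [Complex.norm_def, Complex.normSq_apply, ← h1.2]
    simp only [mul_zero, add_zero]
    rw [Real.sqrt_mul_self h1.1]
  · have ha : ((‖p γ‖ : ℂ)) ≠ 0 := by
      simpa using h0
    have hb : -conj (p γ) ≠ 0 := by simpa using h0
    have h := posdef_pair hp hγ ha hb
    rw [posdef_conj hp γ] at h
    rw [Complex.nonneg_iff] at h
    have hre := h.1
    have hnorm : (p γ).re ^ 2 + (p γ).im ^ 2 = ‖p γ‖ ^ 2 := by
      rw [Complex.sq_norm, Complex.normSq_apply]
      ring
    have hpos : 0 < ‖p γ‖ := norm_pos_iff.mpr h0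
    simp only [Complex.add_re, Complex.mul_re, Complex.mul_im, Complex.conj_re, Complex.conj_im,
      Complex.ofReal_re, Complex.ofReal_im, Complex.neg_re, Complex.neg_im, ← h1.2] at hre
    nlinarith [hnorm, hpos, mul_pos hpos hpos, sq_nonneg ((p γ).re), sq_nonneg ((p γ).im)]

lemma lp_norm_le_of_le {G : Type*} {g h : lp (fun _ : G => ℂ) 2} {C : ℝ} (hC : 0 ≤ C)
    (hle : ∀ γ, ‖(g : ∀ _ : G, ℂ) γ‖ ≤ C * ‖(h : ∀ _ : G, ℂ) γ‖) : ‖g‖ ≤ C * ‖h‖ := by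
  have hp2 : 0 < (2 : ℝ≥0∞).toReal := by norm_num
  apply lp.norm_le_of_tsum_le hp2 (mul_nonneg hC (norm_nonneg h))
  have hsum : Summable fun γ => ‖(h : ∀ _ : G, ℂ) γ‖ ^ (2 : ℝ≥0∞).toReal :=
    (lp.memℓp h).summable hp2
  calc ∑' γ, ‖(g : ∀ _ : G, ℂ) γ‖ ^ (2 : ℝ≥0∞).toReal
      ≤ ∑' γ, C ^ (2 : ℝ≥0∞).toReal * ‖(h : ∀ _ : G, ℂ) γ‖ ^ (2 : ℝ≥0∞).toReal := by
        apply Summable.tsum_le_tsum _ ((lp.memℓp g).summable hp2) (hsum.mul_left _)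
        intro γ
        rw [← Real.mul_rpow hC (norm_nonneg _)]
        exact Real.rpow_le_rpow (norm_nonneg _) (hle γ) hp2.le
    _ = C ^ (2 : ℝ≥0∞).toReal * ∑' γ, ‖(h : ∀ _ : G, ℂ) γ‖ ^ (2 : ℝ≥0∞).toReal := tsum_mul_left
    _ = (C * ‖h‖) ^ (2 : ℝ≥0∞).toReal := by
        rw [← lp.norm_rpow_eq_tsum hp2, Real.mul_rpow hC (norm_nonneg _)]

/-- Group, regular-representation instance of Theorem 4.1: if `p` is positive definite
on a discrete group `G`, `f ∈ ℓ¹(G)` with `f ≥ 0` pointwise, and `T = λ(f)`,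
`S = λ(p·f)` are the corresponding left convolution operators on `ℓ²(G)`, then
`‖λ(p·f)‖ ≤ p(1) ‖λ(f)‖`. -/
theorem conv_mul_posdef_norm_le {G : Type*} [Group G]
    (p f : G → ℂ) (hp : IsPosDef p)
    (hf : Summable fun γ => ‖f γ‖) (hfpos : ∀ γ, 0 ≤ f γ)
    (T S : lp (fun _ : G => ℂ) 2 →L[ℂ] lp (fun _ : G => ℂ) 2)
    (hT : ∀ (ξ : lp (fun _ : G => ℂ) 2) (γ : G),
      (T ξ : ∀ _ : G, ℂ) γ = ∑' δ : G, f δ * (ξ : ∀ _ : G, ℂ) (δ⁻¹ * γ))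
    (hS : ∀ (ξ : lp (fun _ : G => ℂ) 2) (γ : G),
      (S ξ : ∀ _ : G, ℂ) γ = ∑' δ : G, p δ * f δ * (ξ : ∀ _ : G, ℂ) (δ⁻¹ * γ)) :
    ‖S‖ ≤ (p 1).re * ‖T‖ := by
  have h1 := posdef_one hp
  rw [Complex.nonneg_iff] at h1
  set p1 : ℝ := (p 1).re with hp1def
  have hp2 : 0 < (2 : ℝ≥0∞).toReal := by norm_num
  have h2ne : (2 : ℝ≥0∞) ≠ 0 := by norm_num
  have hfre : ∀ γ, f γ = (((f γ).re : ℝ) : ℂ) := by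
    intro γ
    have := Complex.nonneg_iff.mp (hfpos γ)
    exact Complex.ext rfl (by simp [← this.2])
  have hfrenn : ∀ γ, 0 ≤ (f γ).re := fun γ => (Complex.nonneg_iff.mp (hfpos γ)).1
  have hfnorm : ∀ γ, ‖f γ‖ = (f γ).re := by
    intro γ
    rw [hfre γ, Complex.norm_real, Real.norm_eq_abs, abs_of_nonneg (hfrenn γ)]
    simp
  apply ContinuousLinearMap.opNorm_le_bound _ (mul_nonneg h1.1 (norm_nonneg T))
  intro ξ
  have hmem : Memℓp (fun γ => ((‖(ξ : ∀ _ : G, ℂ) γ‖ : ℝ) : ℂ)) 2 := by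
    apply memℓp_gen
    have := (lp.memℓp ξ).summable hp2
    simpa [Complex.norm_real, abs_of_nonneg] using this
  set ξa : lp (fun _ : G => ℂ) 2 := ⟨_, hmem⟩ with hξadef
  have hξacoe : ∀ δ, (ξa : ∀ _ : G, ℂ) δ = ((‖(ξ : ∀ _ : G, ℂ) δ‖ : ℝ) : ℂ) := fun δ => rfl
  have hξa : ‖ξa‖ = ‖ξ‖ := by
    rw [lp.norm_eq_tsum_rpow hp2, lp.norm_eq_tsum_rpow hp2]
    congr 1
    apply tsum_congr
    intro δ
    rw [hξacoe δ, Complex.norm_real, Real.norm_eq_abs, abs_of_nonneg (norm_nonneg _)]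
  have hbd : ∀ δ : G, ‖(ξ : ∀ _ : G, ℂ) δ‖ ≤ ‖ξ‖ := fun δ => lp.norm_apply_le_norm h2ne ξ δ
  have key : ∀ γ, ‖(S ξ : ∀ _ : G, ℂ) γ‖ ≤ p1 * ‖(T ξa : ∀ _ : G, ℂ) γ‖ := by
    intro γ
    have hsum1 : Summable fun δ => (f δ).re * ‖(ξ : ∀ _ : G, ℂ) (δ⁻¹ * γ)‖ := by
      apply Summable.of_nonneg_of_le
        (fun δ => mul_nonneg (hfrenn δ) (norm_nonneg _)) _ (hf.mul_right ‖ξ‖)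
      intro δ
      rw [← hfnorm δ]
      exact mul_le_mul_of_nonneg_left (hbd _) (norm_nonneg _)
    have hsumSnorm : Summable fun δ => ‖p δ * f δ * (ξ : ∀ _ : G, ℂ) (δ⁻¹ * γ)‖ := by
      apply Summable.of_nonneg_of_le (fun δ => norm_nonneg _) _ ((hf.mul_left p1).mul_right ‖ξ‖)
      intro δ
      rw [norm_mul, norm_mul]
      exact mul_le_mul (mul_le_mul (posdef_norm_le hp δ) le_rfl (norm_nonneg _) h1.1)
        (hbd _) (norm_nonneg _) (mul_nonneg h1.1 (norm_nonneg _))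
    have hT' : (T ξa : ∀ _ : G, ℂ) γ
        = ((∑' δ, (f δ).re * ‖(ξ : ∀ _ : G, ℂ) (δ⁻¹ * γ)‖ : ℝ) : ℂ) := by
      rw [hT ξa γ, Complex.ofReal_tsum]
      apply tsum_congr
      intro δ
      rw [hξacoe, Complex.ofReal_mul, ← hfre δ]
    have hTnorm : ‖(T ξa : ∀ _ : G, ℂ) γ‖ = ∑' δ, (f δ).re * ‖(ξ : ∀ _ : G, ℂ) (δ⁻¹ * γ)‖ := by
      rw [hT', Complex.norm_real, Real.norm_eq_abs, abs_of_nonneg]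
      exact tsum_nonneg fun δ => mul_nonneg (hfrenn δ) (norm_nonneg _)
    rw [hS ξ γ, hTnorm]
    calc ‖∑' δ, p δ * f δ * (ξ : ∀ _ : G, ℂ) (δ⁻¹ * γ)‖
        ≤ ∑' δ, ‖p δ * f δ * (ξ : ∀ _ : G, ℂ) (δ⁻¹ * γ)‖ :=
          norm_tsum_le_tsum_norm hsumSnorm
      _ ≤ ∑' δ, p1 * ((f δ).re * ‖(ξ : ∀ _ : G, ℂ) (δ⁻¹ * γ)‖) := by
          apply Summable.tsum_le_tsum _ hsumSnorm (hsum1.mul_left p1)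
          intro δ
          rw [norm_mul, norm_mul, hfnorm δ, ← mul_assoc]
          exact mul_le_mul (mul_le_mul (posdef_norm_le hp δ) le_rfl (hfrenn δ) h1.1)
            le_rfl (norm_nonneg _) (mul_nonneg h1.1 (hfrenn δ))
      _ = p1 * ∑' δ, (f δ).re * ‖(ξ : ∀ _ : G, ℂ) (δ⁻¹ * γ)‖ := tsum_mul_left
  calc ‖S ξ‖ ≤ p1 * ‖T ξa‖ := lp_norm_le_of_le h1.1 key
    _ ≤ p1 * (‖T‖ * ‖ξa‖) := mul_le_mul_of_nonneg_left (T.le_opNorm ξa) h1.1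
    _ = p1 * ‖T‖ * ‖ξ‖ := by rw [hξa]; ring
end
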